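/- Fix w ∈ ℝ^p, b ∈ ℝ, training samples (x_n, y_n) ∈ ℝ^p × {−1, +1} for n = 1, …, N, and constants A > 0, C_a ≥ 0, C > 0. Let U₀ = {δ ∈ ℝ^p : ‖δ‖₂² ≤ C}, and let U ⊆ (ℝ^p)^N be any set with U⁻ ⊆ U ⊆ U⁺, where U⁻ = ⋃_{t=1}^N {(δ₁, …, δ_N) : δ_t ∈ U₀ and δ_i = 0 for all i ≠ t} and U⁺ = {(α₁δ₁, …, α_Nδ_N) : Σ_{i=1}^N α_i = 1, α_i ≥ 0, δ_i ∈ U₀ for all i}. Assume the data are non-separable by (w, b), i.e., there exists t ∈ {1, …, N} with y_t(wᵀx_t + b) < 0. Then sup over (δ₁, …, δ_N) ∈ U of [ A Σ_{n=1}^N [1 − y_n(wᵀ(x_n − δ_n) + b)]₊ − C_a Σ_{n=1}^N ‖δ_n‖₀ ] equals A Σ_{n=1}^N [1 − y_n(wᵀx_n + b)]₊ + sup over δ ∈ U₀ of [ A wᵀδ − C_a ‖δ‖₀ ]. -/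

import Mathlib

open Finset

/-- Hinge function `[z]₊ = max(z, 0)`. -/
noncomputable def hinge (z : ℝ) : ℝ := max z 0

/-- ℓ0 "norm": number of nonzero coordinates, as a real number. -/
noncomputable def l0 {p : ℕ} (δ : Fin p → ℝ) : ℝ :=
  ((Finset.univ.filter (fun i => δ i ≠ 0)).card : ℝ)

/-- Atomic action set `U₀ = {δ : ‖δ‖₂² ≤ C}`. -/
def atomicSet (p : ℕ) (C : ℝ) : Set (Fin p → ℝ) :=
  {δ | ∑ i, (δ i) ^ 2 ≤ C}

/-- `U⁻`: perturbations supported on a single sample, drawn from `U₀`. -/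
def Uminus (p N : ℕ) (C : ℝ) : Set (Fin N → Fin p → ℝ) :=
  {d | ∃ t : Fin N, d t ∈ atomicSet p C ∧ ∀ i : Fin N, i ≠ t → d i = 0}

/-- `U⁺`: convex-combination-scaled perturbations from `U₀`. -/
def Uplus (p N : ℕ) (C : ℝ) : Set (Fin N → Fin p → ℝ) :=
  {d | ∃ (α : Fin N → ℝ) (δ : Fin N → Fin p → ℝ),
    (∑ i, α i = 1) ∧ (∀ i, 0 ≤ α i) ∧ (∀ i, δ i ∈ atomicSet p C) ∧
    ∀ i, d i = α i • δ i}

/-!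
Write `ℓₙ = 1 - yₙ(wᵀxₙ + b)` for the unattacked margins and `S` for the supremum over `U₀`;
`S ≥ 0` since `δ = 0` is admissible. For `d = (αₙδₙ) ∈ U⁺`, subadditivity of the hinge gives
`[ℓₙ + αₙ yₙ wᵀδₙ]₊ ≤ [ℓₙ]₊ + αₙ [yₙ wᵀδₙ]₊`, and since `αₙ ≤ 1` and `‖αₙδₙ‖₀ = ‖δₙ‖₀` for
`αₙ > 0`, the `n`-th attacked term exceeds `A [ℓₙ]₊` by at most `αₙ S`, and `Σ αₙ = 1`.
Conversely, non-separability gives a sample `t` with `ℓₜ > 1`, on which the hinge is linear: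
putting `yₜ δ` on sample `t` alone (an element of `U⁻`) raises the loss by exactly
`A wᵀδ - C_a ‖δ‖₀` whenever `wᵀδ ≥ 0`, and the other `δ` are beaten by `δ = 0`.
-/

open Matrix

lemma hinge_add_mul_le {α : ℝ} (hα : 0 ≤ α) (a z : ℝ) :
    hinge (a + α * z) ≤ hinge a + α * hinge z := by
  unfold hinge
  rw [mul_max_of_nonneg _ _ hα, mul_zero]
  exact max_le (add_le_add (le_max_left _ _) (le_max_left _ _))
    (add_nonneg (le_max_right _ _) (le_max_right _ _))

lemma hinge_of_nonneg {a : ℝ} (ha : 0 ≤ a) : hinge a = a := max_eq_left ha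

lemma mul_hinge_sub_le {A c z M : ℝ} (hA : 0 ≤ A) (hc : 0 ≤ c) (hz : A * z - c ≤ M)
    (hM : 0 ≤ M) : A * hinge z - c ≤ M := by
  unfold hinge
  rw [mul_max_of_nonneg _ _ hA, mul_zero, sub_le_iff_le_add]
  exact max_le (by linarith) (by linarith)

section L0

variable {p : ℕ}

lemma l0_nonneg (δ : Fin p → ℝ) : 0 ≤ l0 δ := Nat.cast_nonneg _

lemma l0_zero : l0 (0 : Fin p → ℝ) = 0 := by simp [l0]

lemma l0_smul {c : ℝ} (hc : c ≠ 0) (δ : Fin p → ℝ) : l0 (c • δ) = l0 δ := by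
  unfold l0
  congr 2
  ext i
  simp [hc]

lemma l0_smul_le (c : ℝ) (δ : Fin p → ℝ) : l0 (c • δ) ≤ l0 δ := by
  unfold l0
  exact_mod_cast Finset.card_le_card fun i => by simp +contextual

lemma mul_l0_le_l0_smul {α : ℝ} (hα0 : 0 ≤ α) (hα1 : α ≤ 1) (δ : Fin p → ℝ) :
    α * l0 δ ≤ l0 (α • δ) := by
  rcases hα0.eq_or_lt with rfl | hα
  · simp [l0_zero]
  · rw [l0_smul hα.ne']
    exact mul_le_of_le_one_left (l0_nonneg δ) hα1

end L0

section AtomicSet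

variable {p : ℕ} {C : ℝ}

lemma zero_mem_atomicSet (hC : 0 ≤ C) : (0 : Fin p → ℝ) ∈ atomicSet p C := by
  simpa [atomicSet] using hC

lemma nonneg_of_mem_atomicSet {δ : Fin p → ℝ} (hδ : δ ∈ atomicSet p C) : 0 ≤ C :=
  (Finset.sum_nonneg fun i _ => sq_nonneg (δ i)).trans hδ

lemma smul_mem_atomicSet {c : ℝ} (hc : |c| ≤ 1) {δ : Fin p → ℝ} (hδ : δ ∈ atomicSet p C) :
    c • δ ∈ atomicSet p C := by
  have hc2 : c ^ 2 ≤ 1 := by rw [← sq_abs]; exact pow_le_one₀ (abs_nonneg c) hc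
  have hsum : 0 ≤ ∑ i, δ i ^ 2 := Finset.sum_nonneg fun i _ => sq_nonneg (δ i)
  calc ∑ i, (c • δ) i ^ 2 = c ^ 2 * ∑ i, δ i ^ 2 := by
        simp only [Pi.smul_apply, smul_eq_mul, mul_pow, Finset.mul_sum]
    _ ≤ ∑ i, δ i ^ 2 := mul_le_of_le_one_left hsum hc2
    _ ≤ C := hδ

lemma dotProduct_le_of_mem_atomicSet (w : Fin p → ℝ) {δ : Fin p → ℝ}
    (hδ : δ ∈ atomicSet p C) : w ⬝ᵥ δ ≤ (∑ i, w i ^ 2 + C) / 2 := by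
  have hδ' : ∑ i, δ i ^ 2 ≤ C := hδ
  have key : 2 * (w ⬝ᵥ δ) ≤ ∑ i, w i ^ 2 + ∑ i, δ i ^ 2 := by
    rw [dotProduct, Finset.mul_sum, ← Finset.sum_add_distrib]
    exact Finset.sum_le_sum fun i _ => by simpa [mul_assoc] using two_mul_le_add_sq (w i) (δ i)
  linarith

end AtomicSet

section Loss

variable {p N : ℕ}

noncomputable def atomGain (A Ca : ℝ) (w δ : Fin p → ℝ) : ℝ := A * (w ⬝ᵥ δ) - Ca * l0 δ

noncomputable def attackedLoss (A Ca b : ℝ) (w : Fin p → ℝ) (x : Fin N → Fin p → ℝ)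
    (y : Fin N → ℝ) (d : Fin N → Fin p → ℝ) : ℝ :=
  A * ∑ n, hinge (1 - y n * (w ⬝ᵥ (x n - d n) + b)) - Ca * ∑ n, l0 (d n)

lemma atomGain_zero (A Ca : ℝ) (w : Fin p → ℝ) : atomGain A Ca w 0 = 0 := by
  simp [atomGain, l0_zero]

lemma bddAbove_atomGain_image {A Ca : ℝ} (hA : 0 ≤ A) (hCa : 0 ≤ Ca) (w : Fin p → ℝ) (C : ℝ) :
    BddAbove (atomGain A Ca w '' atomicSet p C) := by
  refine ⟨A * ((∑ i, w i ^ 2 + C) / 2), ?_⟩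
  rintro _ ⟨δ, hδ, rfl⟩
  have := mul_le_mul_of_nonneg_left (dotProduct_le_of_mem_atomicSet w hδ) hA
  have := mul_nonneg hCa (l0_nonneg δ)
  unfold atomGain
  linarith

lemma exists_dotProduct_nonneg_atomGain_le {A Ca C : ℝ} (hA : 0 ≤ A) (hCa : 0 ≤ Ca)
    (w : Fin p → ℝ) {δ : Fin p → ℝ} (hδ : δ ∈ atomicSet p C) :
    ∃ δ' ∈ atomicSet p C, 0 ≤ w ⬝ᵥ δ' ∧ atomGain A Ca w δ ≤ atomGain A Ca w δ' := by
  rcases le_or_gt 0 (w ⬝ᵥ δ) with hwδ | hwδ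
  · exact ⟨δ, hδ, hwδ, le_rfl⟩
  · refine ⟨0, zero_mem_atomicSet (nonneg_of_mem_atomicSet hδ), by simp, ?_⟩
    have := mul_nonneg hCa (l0_nonneg δ)
    have := mul_nonpos_of_nonneg_of_nonpos hA hwδ.le
    rw [atomGain_zero, atomGain]
    linarith

lemma mul_hinge_sub_le_of_mem_atomicSet {A Ca C M ℓ y α : ℝ} {w δ : Fin p → ℝ}
    (hA : 0 ≤ A) (hCa : 0 ≤ Ca) (hy : |y| ≤ 1) (hα0 : 0 ≤ α) (hα1 : α ≤ 1)
    (hδ : δ ∈ atomicSet p C) (hM : ∀ δ ∈ atomicSet p C, atomGain A Ca w δ ≤ M) :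
    A * hinge (ℓ + y * (w ⬝ᵥ (α • δ))) - Ca * l0 (α • δ) ≤ A * hinge ℓ + α * M := by
  have hM0 : 0 ≤ M := by
    simpa [atomGain_zero] using hM 0 (zero_mem_atomicSet (nonneg_of_mem_atomicSet hδ))
  have hz : A * (y * (w ⬝ᵥ δ)) - Ca * l0 δ ≤ M :=
    calc A * (y * (w ⬝ᵥ δ)) - Ca * l0 δ ≤ atomGain A Ca w (y • δ) := by
          rw [atomGain, dotProduct_smul, smul_eq_mul]
          gcongr
          exact l0_smul_le y δ
      _ ≤ M := hM _ (smul_mem_atomicSet hy hδ)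
  have hhinge := mul_hinge_sub_le hA (mul_nonneg hCa (l0_nonneg δ)) hz hM0
  calc A * hinge (ℓ + y * (w ⬝ᵥ (α • δ))) - Ca * l0 (α • δ)
      ≤ A * (hinge ℓ + α * hinge (y * (w ⬝ᵥ δ))) - Ca * (α * l0 δ) := by
        rw [dotProduct_smul, smul_eq_mul, mul_left_comm]
        gcongr
        · exact hinge_add_mul_le hα0 _ _
        · exact mul_l0_le_l0_smul hα0 hα1 δ
    _ = A * hinge ℓ + α * (A * hinge (y * (w ⬝ᵥ δ)) - Ca * l0 δ) := by ring
    _ ≤ A * hinge ℓ + α * M := by gcongr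

lemma pi_single_mem_Uminus {C : ℝ} (t : Fin N) {v : Fin p → ℝ} (hv : v ∈ atomicSet p C) :
    Pi.single t v ∈ Uminus p N C :=
  ⟨t, by simpa using hv, fun _ hi => Pi.single_eq_of_ne hi _⟩

lemma one_sub_mul_dotProduct_sub (y b : ℝ) (w x d : Fin p → ℝ) :
    1 - y * (w ⬝ᵥ (x - d) + b) = (1 - y * (w ⬝ᵥ x + b)) + y * (w ⬝ᵥ d) := by
  rw [dotProduct_sub]
  ring

lemma attackedLoss_le_of_mem_Uplus {A Ca b C M : ℝ} {w : Fin p → ℝ} {x : Fin N → Fin p → ℝ}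
    {y : Fin N → ℝ} {d : Fin N → Fin p → ℝ} (hA : 0 ≤ A) (hCa : 0 ≤ Ca)
    (hy : ∀ n, |y n| ≤ 1) (hd : d ∈ Uplus p N C)
    (hM : ∀ δ ∈ atomicSet p C, atomGain A Ca w δ ≤ M) :
    attackedLoss A Ca b w x y d ≤ A * ∑ n, hinge (1 - y n * (w ⬝ᵥ x n + b)) + M := by
  obtain ⟨α, δ, hα1, hα0, hδ, rfl⟩ : ∃ (α : Fin N → ℝ) (δ : Fin N → Fin p → ℝ),
      (∑ i, α i = 1) ∧ (∀ i, 0 ≤ α i) ∧ (∀ i, δ i ∈ atomicSet p C) ∧ d = fun i => α i • δ i := by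
    obtain ⟨α, δ, h1, h0, hδ, hd⟩ := hd
    exact ⟨α, δ, h1, h0, hδ, funext hd⟩
  have hαle : ∀ n, α n ≤ 1 := fun n =>
    hα1 ▸ Finset.single_le_sum (fun i _ => hα0 i) (Finset.mem_univ n)
  calc attackedLoss A Ca b w x y (fun i => α i • δ i)
      = ∑ n, (A * hinge ((1 - y n * (w ⬝ᵥ x n + b)) + y n * (w ⬝ᵥ (α n • δ n)))
          - Ca * l0 (α n • δ n)) := by
        simp only [attackedLoss, one_sub_mul_dotProduct_sub, Finset.mul_sum,
          Finset.sum_sub_distrib]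
    _ ≤ ∑ n, (A * hinge (1 - y n * (w ⬝ᵥ x n + b)) + α n * M) :=
        Finset.sum_le_sum fun n _ =>
          mul_hinge_sub_le_of_mem_atomicSet hA hCa (hy n) (hα0 n) (hαle n) (hδ n) hM
    _ = A * ∑ n, hinge (1 - y n * (w ⬝ᵥ x n + b)) + M := by
        rw [Finset.sum_add_distrib, ← Finset.sum_mul, hα1, one_mul, Finset.mul_sum]

lemma attackedLoss_single {A Ca b : ℝ} {w : Fin p → ℝ} {x : Fin N → Fin p → ℝ}
    {y : Fin N → ℝ} {t : Fin N} (hyt : y t ^ 2 = 1) (ht : y t * (w ⬝ᵥ x t + b) ≤ 1)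
    {δ : Fin p → ℝ} (hδ : 0 ≤ w ⬝ᵥ δ) :
    attackedLoss A Ca b w x y (Pi.single t (y t • δ))
      = A * ∑ n, hinge (1 - y n * (w ⬝ᵥ x n + b)) + atomGain A Ca w δ := by
  have hℓt : 0 ≤ 1 - y t * (w ⬝ᵥ x t + b) := by linarith
  have hgain : hinge ((1 - y t * (w ⬝ᵥ x t + b)) + y t * (w ⬝ᵥ (y t • δ)))
      - hinge (1 - y t * (w ⬝ᵥ x t + b)) = w ⬝ᵥ δ := by
    rw [dotProduct_smul, smul_eq_mul, ← mul_assoc, ← sq, hyt, one_mul,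
      hinge_of_nonneg (add_nonneg hℓt hδ), hinge_of_nonneg hℓt, add_sub_cancel_left]
  have hloss : ∀ n,
      hinge (1 - y n * (w ⬝ᵥ (x n - (Pi.single t (y t • δ) : Fin N → Fin p → ℝ) n) + b))
        = hinge (1 - y n * (w ⬝ᵥ x n + b)) + (Pi.single t (w ⬝ᵥ δ) : Fin N → ℝ) n := by
    intro n
    have := Pi.apply_single (fun n v => hinge ((1 - y n * (w ⬝ᵥ x n + b)) + y n * (w ⬝ᵥ v))
      - hinge (1 - y n * (w ⬝ᵥ x n + b))) (by simp) t (y t • δ) n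
    beta_reduce at this
    rw [hgain] at this
    rw [one_sub_mul_dotProduct_sub]
    linarith
  have hl0 : ∀ n, l0 ((Pi.single t (y t • δ) : Fin N → Fin p → ℝ) n)
      = (Pi.single t (l0 δ) : Fin N → ℝ) n := by
    intro n
    rw [Pi.apply_single (fun _ => l0) (fun _ => l0_zero), l0_smul (by rintro h; simp [h] at hyt)]
  simp only [attackedLoss, hloss, hl0, Finset.sum_add_distrib, Fintype.sum_pi_single', atomGain]
  ring

end Loss

lemma csSup_image_eq_add_of_isLUB {α β : Type*} {F : α → ℝ} {g : β → ℝ} {U : Set α}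
    {V : Set β} {K s : ℝ} (hs : IsLUB (g '' V) s) (hV : V.Nonempty)
    (hle : ∀ d ∈ U, F d ≤ K + s) (hge : ∀ δ ∈ V, ∃ d ∈ U, K + g δ ≤ F d) :
    sSup (F '' U) = K + s := by
  obtain ⟨δ, hδ⟩ := hV
  obtain ⟨d, hd, -⟩ := hge δ hδ
  refine IsLUB.csSup_eq ⟨?_, fun M hM => ?_⟩ ⟨F d, d, hd, rfl⟩
  · rintro _ ⟨d, hd, rfl⟩
    exact hle d hd
  · suffices s ≤ M - K by linarith
    refine hs.2 ?_
    rintro _ ⟨δ, hδ, rfl⟩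
    obtain ⟨d, hd, hle⟩ := hge δ hδ
    linarith [hM ⟨d, hd, rfl⟩]

/-- Proposition 1: for any sublinear aggregated action set
`U⁻ ⊆ U ⊆ U⁺`, if the data are non-separable by `(w, b)`, the robust hinge-loss
maximization over `U` reduces to a single-perturbation problem over `U₀`. -/
theorem robust_hinge_sup_eq {p N : ℕ}
    (w : Fin p → ℝ) (b : ℝ)
    (x : Fin N → Fin p → ℝ) (y : Fin N → ℝ)
    (hy : ∀ n, y n = 1 ∨ y n = -1)
    (A Ca C : ℝ) (hA : 0 < A) (hCa : 0 ≤ Ca) (hC : 0 < C)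
    (U : Set (Fin N → Fin p → ℝ))
    (hUlow : Uminus p N C ⊆ U) (hUhigh : U ⊆ Uplus p N C)
    (hsep : ∃ t : Fin N, y t * ((∑ i, w i * x t i) + b) < 0) :
    sSup ((fun d : Fin N → Fin p → ℝ =>
        A * ∑ n, hinge (1 - y n * ((∑ i, w i * (x n i - d n i)) + b))
          - Ca * ∑ n, l0 (d n)) '' U)
      =
    A * ∑ n, hinge (1 - y n * ((∑ i, w i * x n i) + b))
      + sSup ((fun δ : Fin p → ℝ =>
          A * (∑ i, w i * δ i) - Ca * l0 δ) '' atomicSet p C) := by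
  obtain ⟨t, ht⟩ := hsep
  have hbdd := bddAbove_atomGain_image hA.le hCa w C
  have h0 : (0 : Fin p → ℝ) ∈ atomicSet p C := zero_mem_atomicSet hC.le
  have hne : (atomGain A Ca w '' atomicSet p C).Nonempty := ⟨_, 0, h0, rfl⟩
  change sSup (attackedLoss A Ca b w x y '' U) = A * ∑ n, hinge (1 - y n * (w ⬝ᵥ x n + b))
    + sSup (atomGain A Ca w '' atomicSet p C)
  refine csSup_image_eq_add_of_isLUB (isLUB_csSup hne hbdd) ⟨0, h0⟩
    (fun d hd => ?_) (fun δ hδ => ?_)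
  · refine attackedLoss_le_of_mem_Uplus hA.le hCa (fun n => ?_) (hUhigh hd)
      fun δ hδ => le_csSup hbdd ⟨δ, hδ, rfl⟩
    rcases hy n with h | h <;> simp [h]
  · have hyt : y t ^ 2 = 1 := by rcases hy t with h | h <;> simp [h]
    have hyt1 : |y t| ≤ 1 := by rcases hy t with h | h <;> simp [h]
    obtain ⟨δ', hδ', hwδ', hle⟩ := exists_dotProduct_nonneg_atomGain_le hA.le hCa w hδ
    refine ⟨_, hUlow (pi_single_mem_Uminus t (smul_mem_atomicSet hyt1 hδ')), ?_⟩
    rw [attackedLoss_single hyt (ht.le.trans zero_le_one) hwδ']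
    linarith
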